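/- arXiv:1410.3247 — 7 statements merged into one kernel-verified Lean document; each statement's English description precedes it below -/
import Mathlib

section
/- Let P be a finite poset and n a positive integer. Then P admits an n-Grundy coloring if and only if there exists a linear presentation order ≺ on the vertices of P such that the First-Fit algorithm applied to P in order ≺ uses exactly n chains, i.e., χ_FF(P^≺) = n. -/
/-- `S` is an antichain with respect to the order relation `le`. -/
def IsAntichainOn {α : Type*} (le : α → α → Prop) (S : Finset α) : Prop :=
  ∀ a ∈ S, ∀ b ∈ S, a ≠ b → ¬ le a b ∧ ¬ le b a

/-- The poset `(α, le)` has width `w`: there is an antichain of size `w`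
and every antichain has size at most `w`. -/
def IsWidth {α : Type*} (le : α → α → Prop) (w : ℕ) : Prop :=
  (∃ S : Finset α, IsAntichainOn le S ∧ S.card = w) ∧
    ∀ S : Finset α, IsAntichainOn le S → S.card ≤ w

/-- `g` is an `n`-Grundy coloring of the poset `(α, le)`:
`g` takes values in `{1,…,n}`, is surjective onto `{1,…,n}`,
each color class is a chain (G1), and each vertex of color `j`
has an incomparable witness of every smaller color (G3). -/
def IsGrundy {α : Type*} (le : α → α → Prop) (n : ℕ) (g : α → ℕ) : Prop :=
  (∀ v, 1 ≤ g v ∧ g v ≤ n) ∧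
  (∀ i, 1 ≤ i → i ≤ n → ∃ v, g v = i) ∧
  (∀ u v, g u = g v → le u v ∨ le v u) ∧
  (∀ v i, 1 ≤ i → i < g v → ∃ u, (¬ le u v ∧ ¬ le v u) ∧ g u = i)

/-- `c` is the First-Fit chain partition of the poset `(α, le)` presented in the
strict total order `prec`: every vertex `v` gets the least color `c v ≥ 1` such
that all `prec`-earlier vertices of the same color are comparable to `v`. -/
def IsFFColoring {α : Type*} (le prec : α → α → Prop) (c : α → ℕ) : Prop :=
  ∀ v, 1 ≤ c v ∧
    (∀ u, prec u v → c u = c v → le u v ∨ le v u) ∧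
    (∀ j, 1 ≤ j → j < c v → ∃ u, prec u v ∧ c u = j ∧ ¬ le u v ∧ ¬ le v u)

/-- The sequences `x` (lower leg) and `y` (upper leg) form an induced copy of
the `m`-ladder `L_m` in the poset `(α, le)`. -/
def IsLadderIn {α : Type*} (le : α → α → Prop) {m : ℕ} (x y : Fin m → α) : Prop :=
  (∀ i j : Fin m, i < j → le (x i) (x j) ∧ x i ≠ x j) ∧
  (∀ i j : Fin m, i < j → le (y i) (y j) ∧ y i ≠ y j) ∧
  (∀ i : Fin m, le (x i) (y i) ∧ x i ≠ y i) ∧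
  (∀ i j : Fin m, i < j → ¬ le (y i) (x j) ∧ ¬ le (x j) (y i))

/-- The poset `(α, le)` contains no induced copy of the `m`-ladder `L_m`. -/
def LFree {α : Type*} (le : α → α → Prop) (m : ℕ) : Prop :=
  ¬ ∃ x y : Fin m → α, IsLadderIn le x y

/-- `A ⊑ B`: every element of `A` is `le`-below some element of `B`. -/
def Below {α : Type*} (le : α → α → Prop) (A B : Finset α) : Prop :=
  ∀ a ∈ A, ∃ b ∈ B, le a b

/-- `A ⊏ B`: `A ⊑ B` and `A ≠ B`. -/
def StrictBelow {α : Type*} (le : α → α → Prop) (A B : Finset α) : Prop :=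
  Below le A B ∧ A ≠ B

/-- The bipartite poset induced by antichains `A` and `B` (with `A` below `B`)
is a core: `|A| = |B|` and every comparable pair `x ≤ y` with `x ∈ A`, `y ∈ B`
is a Dilworth edge, i.e. belongs to a perfect matching of comparable pairs. -/
def IsCore {α : Type*} (le : α → α → Prop) (A B : Finset α) : Prop :=
  A.card = B.card ∧
    ∀ x ∈ A, ∀ y ∈ B, le x y →
      ∃ f : α → α, Set.BijOn f ↑A ↑B ∧ (∀ a ∈ A, le a (f a)) ∧ f x = y

/-- `A j = A_{s(i)}`: among the antichains presented before `A i`, it is the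
`⊑`-least one strictly above `A i`. -/
def IsSuccIdx {α : Type*} (le : α → α → Prop) {n : ℕ} (A : Fin n → Finset α)
    (i j : Fin n) : Prop :=
  j < i ∧ StrictBelow le (A i) (A j) ∧
    ∀ k : Fin n, k < i → StrictBelow le (A i) (A k) → Below le (A j) (A k)

/-- `A j = A_{p(i)}`: among the antichains presented before `A i`, it is the
`⊑`-greatest one strictly below `A i`. -/
def IsPredIdx {α : Type*} (le : α → α → Prop) {n : ℕ} (A : Fin n → Finset α)
    (i j : Fin n) : Prop :=
  j < i ∧ StrictBelow le (A j) (A i) ∧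
    ∀ k : Fin n, k < i → StrictBelow le (A k) (A i) → Below le (A k) (A j)

/-- `(P, A_1, …, A_n)` is a regular poset of width `w`: the `A i` are pairwise
disjoint maximum antichains (each of size `w`, the width of `P`) covering `P`,
linearly ordered by `⊑`; consecutive-at-presentation-time pairs induce cores
(R4); and every comparability with an earlier antichain factors through the
`⊑`-neighbors at presentation time (R5). -/
def IsRegularPoset {α : Type*} (le : α → α → Prop) (w : ℕ) {n : ℕ}
    (A : Fin n → Finset α) : Prop :=
  (∀ v : α, ∃ i, v ∈ A i) ∧
  (∀ i j : Fin n, i ≠ j → ∀ v ∈ A i, v ∉ A j) ∧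
  (∀ i, IsAntichainOn le (A i)) ∧
  (∀ i, (A i).card = w) ∧
  IsWidth le w ∧
  (∀ i j : Fin n, Below le (A i) (A j) ∨ Below le (A j) (A i)) ∧
  (∀ i j : Fin n, IsSuccIdx le A i j → IsCore le (A i) (A j)) ∧
  (∀ i j : Fin n, IsPredIdx le A i j → IsCore le (A j) (A i)) ∧
  (∀ (i j : Fin n) (x y : α), x ∈ A i → y ∈ A j → le x y → x ≠ y →
    (j < i → ∃ k, IsSuccIdx le A i k ∧ ∃ z ∈ A k, le x z ∧ x ≠ z ∧ le z y) ∧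
    (i < j → ∃ k, IsPredIdx le A j k ∧ ∃ z ∈ A k, le x z ∧ le z y ∧ z ≠ y))

/-- `x` is an ascending chain: increasing both in the poset and in color. -/
def IsAscending {α : Type*} (le : α → α → Prop) (g : α → ℕ) {k : ℕ}
    (x : Fin k → α) : Prop :=
  ∀ i j : Fin k, i < j → (le (x i) (x j) ∧ x i ≠ x j) ∧ g (x i) < g (x j)

/-- `x` is a descending chain: decreasing in the poset, increasing in color. -/
def IsDescending {α : Type*} (le : α → α → Prop) (g : α → ℕ) {k : ℕ}
    (x : Fin k → α) : Prop :=
  ∀ i j : Fin k, i < j → (le (x j) (x i) ∧ x i ≠ x j) ∧ g (x i) < g (x j)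

/-- The order of the lexicographic product `P · Q`. -/
def LexLe {α β : Type*} (leP : α → α → Prop) (leQ : β → β → Prop) :
    α × β → α × β → Prop :=
  fun a b => (leP a.1 b.1 ∧ a.1 ≠ b.1) ∨ (a.1 = b.1 ∧ leQ a.2 b.2)

/-!
A Grundy coloring is itself the First-Fit coloring of any presentation that lists the vertices
by increasing color: (G1) makes each class a chain and (G3) supplies the earlier incomparable
witnesses that push a vertex past every smaller color. Conversely a First-Fit coloring satisfies
(G1) and (G3) by construction, and its set of colors is closed downwards in `{1, 2, …}`, so it is
`{1, …, n}` when `n` colors are used.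
-/

open Finset

lemma Finset.image_univ_eq_Icc_one_iff {α : Type*} [Fintype α] (g : α → ℕ) (n : ℕ) :
    univ.image g = Icc 1 n ↔
      (∀ v, 1 ≤ g v ∧ g v ≤ n) ∧ ∀ i, 1 ≤ i → i ≤ n → ∃ v, g v = i := by
  simp only [Finset.ext_iff, mem_image, mem_univ, true_and, mem_Icc]
  refine ⟨fun h => ⟨fun v => (h _).1 ⟨v, rfl⟩, fun i h1 h2 => (h i).2 ⟨h1, h2⟩⟩, ?_⟩
  rintro ⟨hrange, hsurj⟩ i
  exact ⟨fun ⟨v, hv⟩ => hv ▸ hrange v, fun ⟨h1, h2⟩ => hsurj i h1 h2⟩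

lemma Finset.eq_Icc_one_card_of_downward_closed {S : Finset ℕ} (hpos : ∀ j ∈ S, 1 ≤ j)
    (hdown : ∀ j ∈ S, ∀ i, 1 ≤ i → i < j → i ∈ S) : S = Icc 1 #S := by
  have hle_card : ∀ j ∈ S, j ≤ #S := by
    intro j hj
    have hsub : Icc 1 j ⊆ S := by
      intro i hi
      rw [mem_Icc] at hi
      rcases hi.2.eq_or_lt with rfl | hlt
      · exact hj
      · exact hdown j hj i hi.1 hlt
    simpa using card_le_card hsub
  refine eq_of_subset_of_card_le (fun j hj => mem_Icc.2 ⟨hpos j hj, hle_card j hj⟩) ?_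
  simp

lemma isStrictTotalOrder_of_injective {α β : Type*} [LinearOrder β] (f : α → β)
    (hf : Function.Injective f) : IsStrictTotalOrder α (fun u v => f u < f v) :=
  letI := LinearOrder.lift' f hf
  inferInstanceAs (IsStrictTotalOrder α (· < ·))

section

variable {α : Type*} {le prec : α → α → Prop}

lemma IsGrundy.isFFColoring {n : ℕ} {g : α → ℕ} (hg : IsGrundy le n g)
    (hprec : ∀ u v, g u < g v → prec u v) : IsFFColoring le prec g := by
  obtain ⟨hrange, -, hchain, hwitness⟩ := hg
  refine fun v => ⟨(hrange v).1, fun u _ huv => hchain u v huv, fun j h1 h2 => ?_⟩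
  obtain ⟨u, hinc, rfl⟩ := hwitness v j h1 h2
  exact ⟨u, hprec u v h2, rfl, hinc⟩

variable [Fintype α] {c : α → ℕ}

lemma IsFFColoring.image_univ_eq_Icc (hc : IsFFColoring le prec c) :
    univ.image c = Icc 1 #(univ.image c) := by
  refine eq_Icc_one_card_of_downward_closed ?_ ?_ <;> simp only [mem_image, mem_univ, true_and]
  · rintro _ ⟨v, rfl⟩
    exact (hc v).1
  · rintro _ ⟨v, rfl⟩ i h1 h2
    obtain ⟨u, -, hu, -⟩ := (hc v).2.2 i h1 h2
    exact ⟨u, hu⟩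

lemma IsFFColoring.isGrundy [Std.Refl le] [Std.Trichotomous prec]
    (hc : IsFFColoring le prec c) : IsGrundy le #(univ.image c) c := by
  obtain ⟨hrange, hsurj⟩ := (image_univ_eq_Icc_one_iff c _).1 hc.image_univ_eq_Icc
  refine ⟨hrange, hsurj, fun u v huv => ?_, fun v i h1 h2 => ?_⟩
  · rcases trichotomous_of prec u v with h | rfl | h
    · exact (hc v).2.1 u h huv
    · exact Or.inl (refl_of le u)
    · exact ((hc u).2.1 v h huv.symm).symm
  · obtain ⟨u, -, hu, hinc⟩ := (hc v).2.2 i h1 h2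
    exact ⟨u, hinc, hu⟩

end

theorem stmt_1_general {α : Type} [Fintype α] (le : α → α → Prop)
    (hle : IsPartialOrder α le) (n : ℕ) :
    (∃ g : α → ℕ, IsGrundy le n g) ↔
      ∃ (prec : α → α → Prop) (c : α → ℕ),
        IsStrictTotalOrder α prec ∧ IsFFColoring le prec c ∧
        (Finset.univ.image c).card = n := by
  constructor
  · rintro ⟨g, hg⟩
    let key : α → ℕ ×ₗ Fin (Fintype.card α) := fun v => toLex (g v, Fintype.equivFin α v)
    have hkey : Function.Injective key := fun u v h =>
      (Fintype.equivFin α).injective (congrArg Prod.snd (toLex.injective h))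
    refine ⟨fun u v => key u < key v, g, isStrictTotalOrder_of_injective key hkey,
      hg.isFFColoring fun u v h => Prod.Lex.toLex_lt_toLex.2 (Or.inl h), ?_⟩
    rw [(image_univ_eq_Icc_one_iff g n).2 ⟨hg.1, hg.2.1⟩, Nat.card_Icc, Nat.add_sub_cancel]
  · rintro ⟨prec, c, hprec, hc, rfl⟩
    exact ⟨c, hc.isGrundy⟩

/-- A finite poset has an `n`-Grundy coloring iff there is a
presentation order on which First-Fit uses exactly `n` chains. -/
theorem stmt_1 {α : Type} [Fintype α] (le : α → α → Prop)
    (hle : IsPartialOrder α le) (n : ℕ) (hn : 0 < n) :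
    (∃ g : α → ℕ, IsGrundy le n g) ↔
      ∃ (prec : α → α → Prop) (c : α → ℕ),
        IsStrictTotalOrder α prec ∧ IsFFColoring le prec c ∧
        (Finset.univ.image c).card = n :=
  stmt_1_general le hle n
end

section
/- Let (P, A_1,…,A_n) be a regular poset of width w. Then for all indices r, s ∈ {1,…,n} with A_r ⊏ A_s (i.e., A_r ⊑ A_s and A_r ≠ A_s), the bipartite subposet of P induced by A_r ∪ A_s is a core. -/
/-! Rule R5 factors a comparability `x < y` between antichains presented at times `i ≠ j`
through the `⊑`-neighbour, at presentation time, of the later one, and R4 makes that neighbour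
pair a core. Composing the two perfect matchings and recursing on the later presentation index
yields a perfect matching through any comparable pair. -/

def IsDilworthEdge {α : Type*} (le : α → α → Prop) (A B : Finset α) (x y : α) : Prop :=
  ∃ f : α → α, Set.BijOn f ↑A ↑B ∧ (∀ a ∈ A, le a (f a)) ∧ f x = y

namespace IsDilworthEdge

variable {α : Type*} {le : α → α → Prop} {A B C : Finset α} {x y z : α}

theorem refl [Std.Refl le] (A : Finset α) (x : α) : IsDilworthEdge le A A x x :=
  ⟨id, Set.bijOn_id _, fun a _ => refl_of le a, rfl⟩

theorem trans [IsTrans α le] (hxz : IsDilworthEdge le A B x z)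
    (hzy : IsDilworthEdge le B C z y) : IsDilworthEdge le A C x y := by
  obtain ⟨f, hf, hf_le, rfl⟩ := hxz
  obtain ⟨g, hg, hg_le, rfl⟩ := hzy
  exact ⟨g ∘ f, hg.comp hf, fun a ha => _root_.trans (hf_le a ha) (hg_le (f a) (hf.mapsTo ha)),
    rfl⟩

end IsDilworthEdge

theorem IsRegularPoset.isDilworthEdge {α : Type*} {le : α → α → Prop} [IsPreorder α le]
    {w n : ℕ} {A : Fin n → Finset α} (hreg : IsRegularPoset le w A) {i j : Fin n} {x y : α}
    (hx : x ∈ A i) (hy : y ∈ A j) (hxy : le x y) : IsDilworthEdge le (A i) (A j) x y := by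
  have ⟨_, hdisj, hanti, _, _, _, hsucc, hpred, hR5⟩ := hreg
  by_cases hne : x = y
  · subst hne
    obtain rfl : i = j := by_contra fun hij => hdisj i j hij x hx hy
    exact .refl _ x
  rcases lt_trichotomy i j with hij | rfl | hji
  · obtain ⟨k, hk, z, hz, hxz, hzy, -⟩ := (hR5 i j x y hx hy hxy hne).2 hij
    have hkj : k < j := hk.1
    exact (hreg.isDilworthEdge hx hz hxz).trans ((hpred j k hk).2 z hz y hy hzy)
  · exact absurd hxy (hanti i x hx y hy hne).1
  · obtain ⟨k, hk, z, hz, hxz, -, hzy⟩ := (hR5 i j x y hx hy hxy hne).1 hji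
    have hki : k < i := hk.1
    exact IsDilworthEdge.trans ((hsucc i k hk).2 x hx z hz hxz) (hreg.isDilworthEdge hz hy hzy)
termination_by max (i : ℕ) j
decreasing_by all_goals omega

theorem stmt_2_general {α : Type} (le : α → α → Prop)
    (hle : IsPartialOrder α le) (w : ℕ) {n : ℕ} (A : Fin n → Finset α)
    (hreg : IsRegularPoset le w A) (r s : Fin n) :
    IsCore le (A r) (A s) :=
  have := hle
  ⟨(hreg.2.2.2.1 r).trans (hreg.2.2.2.1 s).symm,
    fun _ hx _ hy hxy => hreg.isDilworthEdge hx hy hxy⟩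

/-- In a regular poset, for any two maximum antichains
`A r ⊏ A s`, the bipartite subposet induced by `A r ∪ A s` is a core. -/
theorem stmt_2 {α : Type} [Fintype α] (le : α → α → Prop)
    (hle : IsPartialOrder α le) (w : ℕ) {n : ℕ} (A : Fin n → Finset α)
    (hreg : IsRegularPoset le w A) (r s : Fin n)
    (hrs : StrictBelow le (A r) (A s)) :
    IsCore le (A r) (A s) :=
  stmt_2_general le hle w A hreg r s
end

section
/- Let (P, A_1,…,A_n) be a regular poset of width w and let r, s ∈ {1,…,n} satisfy A_r ⊏ A_s. Let t be an index with A_r ⊑ A_t ⊑ A_s such that either t ≤ u for every index u with A_t ⊑ A_u ⊑ A_s, or t ≤ u for every index u with A_r ⊑ A_u ⊑ A_t (i.e., A_t is the earliest presented antichain among those in the interval [A_t, A_s] or among those in [A_r, A_t]). Then for every x ∈ A_r and y ∈ A_s with x ≤ y there exists z ∈ A_t with x ≤ z ≤ y. -/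
/-!
By (R5), a comparability `x ≤ y` with `x ∈ A b`, `y ∈ A e`, `b ≠ e`, passes through
`A_{s(b)}` if `b` was presented after `e`, and through `A_{p(e)}` otherwise. Replace `A b` or
`A e` by that neighbour and repeat until `A t` becomes an endpoint. The neighbour was chosen
among antichains presented earlier, and `A t` is presented before every antichain of the
relevant interval, so the neighbour either stays on its side of `A t` or is `A t` itself.
Each step moves to an earlier presented index, so the process terminates.
-/

def FactorsThrough {α : Type*} (le : α → α → Prop) (A B C : Finset α) : Prop :=
  ∀ x ∈ A, ∀ y ∈ C, le x y → ∃ z ∈ B, le x z ∧ le z y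

def PresentedFirstIn {α : Type*} (le : α → α → Prop) {n : ℕ} (A : Fin n → Finset α)
    (b e t : Fin n) : Prop :=
  ∀ u : Fin n, Below le (A b) (A u) → Below le (A u) (A e) → t ≤ u

section Below

variable {α : Type*} {le : α → α → Prop} {A B C : Finset α}

theorem below_refl [Std.Refl le] (A : Finset α) : Below le A A :=
  fun a ha => ⟨a, ha, refl_of le a⟩

theorem Below.trans [IsTrans α le] (hAB : Below le A B) (hBC : Below le B C) : Below le A C := by
  intro a ha
  obtain ⟨b, hb, hab⟩ := hAB a ha
  obtain ⟨c, hc, hbc⟩ := hBC b hb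
  exact ⟨c, hc, trans_of le hab hbc⟩

theorem IsAntichainOn.subset_of_below_of_below [IsPartialOrder α le] (hA : IsAntichainOn le A)
    (hAB : Below le A B) (hBA : Below le B A) : A ⊆ B := by
  intro a ha
  obtain ⟨b, hb, hab⟩ := hAB a ha
  obtain ⟨a', ha', hba'⟩ := hBA b hb
  have haa' : a = a' := by
    by_contra hne
    exact (hA a ha a' ha' hne).1 (trans_of le hab hba')
  exact (antisymm hab (haa' ▸ hba') : a = b) ▸ hb

theorem IsAntichainOn.eq_of_below_of_below [IsPartialOrder α le] (hA : IsAntichainOn le A)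
    (hB : IsAntichainOn le B) (hAB : Below le A B) (hBA : Below le B A) : A = B :=
  (hA.subset_of_below_of_below hAB hBA).antisymm (hB.subset_of_below_of_below hBA hAB)

end Below

namespace IsRegularPoset

variable {α : Type*} {le : α → α → Prop} {w n : ℕ} {A : Fin n → Finset α}

theorem eq_of_mem_of_eq (hreg : IsRegularPoset le w A) {i j : Fin n} {x : α} (hx : x ∈ A i)
    (hij : A i = A j) : i = j := by
  by_contra hne
  exact hreg.2.1 i j hne x hx (hij ▸ hx)

theorem below_total (hreg : IsRegularPoset le w A) (i j : Fin n) :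
    Below le (A i) (A j) ∨ Below le (A j) (A i) :=
  hreg.2.2.2.2.2.1 i j

theorem eq_of_below_of_below [IsPartialOrder α le] (hreg : IsRegularPoset le w A) {i j : Fin n}
    (hij : Below le (A i) (A j)) (hji : Below le (A j) (A i)) : A i = A j :=
  (hreg.2.2.1 i).eq_of_below_of_below (hreg.2.2.1 j) hij hji

theorem exists_predIdx_between (hreg : IsRegularPoset le w A) {i j : Fin n} {x y : α}
    (hx : x ∈ A i) (hy : y ∈ A j) (hxy : le x y) (hij : i < j) :
    ∃ k, IsPredIdx le A j k ∧ ∃ z ∈ A k, le x z ∧ le z y := by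
  have hne : x ≠ y := fun h => hreg.2.1 i j hij.ne x hx (h ▸ hy)
  obtain ⟨k, hk, z, hz, hxz, hzy, -⟩ := (hreg.2.2.2.2.2.2.2.2 i j x y hx hy hxy hne).2 hij
  exact ⟨k, hk, z, hz, hxz, hzy⟩

theorem exists_succIdx_between (hreg : IsRegularPoset le w A) {i j : Fin n} {x y : α}
    (hx : x ∈ A i) (hy : y ∈ A j) (hxy : le x y) (hji : j < i) :
    ∃ k, IsSuccIdx le A i k ∧ ∃ z ∈ A k, le x z ∧ le z y := by
  have hne : x ≠ y := fun h => hreg.2.1 j i hji.ne y hy (h ▸ hx)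
  obtain ⟨k, hk, z, hz, hxz, -, hzy⟩ := (hreg.2.2.2.2.2.2.2.2 i j x y hx hy hxy hne).1 hji
  exact ⟨k, hk, z, hz, hxz, hzy⟩

theorem factorsThrough_of_presentedFirst_above [IsPartialOrder α le]
    (hreg : IsRegularPoset le w A) {b e t : Fin n} (hbt : Below le (A b) (A t))
    (hte : Below le (A t) (A e)) (hfirst : PresentedFirstIn le A t e t) :
    FactorsThrough le (A b) (A t) (A e) := by
  intro x hx y hy hxy
  by_cases htb : t = b
  · exact ⟨x, htb ▸ hx, refl_of le x, hxy⟩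
  by_cases hte_eq : t = e
  · exact ⟨y, hte_eq ▸ hy, hxy, refl_of le y⟩
  rcases lt_trichotomy b e with hbe | rfl | heb
  · obtain ⟨m, ⟨-, ⟨hme, -⟩, hmax⟩, z, hz, hxz, hzy⟩ :=
      hreg.exists_predIdx_between hx hy hxy hbe
    have htm : Below le (A t) (A m) :=
      hmax t ((hfirst e hte (below_refl _)).lt_of_ne hte_eq)
        ⟨hte, fun h => hte_eq (hreg.eq_of_mem_of_eq hy h.symm).symm⟩
    obtain ⟨z', hz', hxz', hz'z⟩ := hreg.factorsThrough_of_presentedFirst_above hbt htm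
      (fun u htu hum => hfirst u htu (hum.trans hme)) x hx z hz hxz
    exact ⟨z', hz', hxz', trans_of le hz'z hzy⟩
  · exact absurd (hreg.eq_of_mem_of_eq hx (hreg.eq_of_below_of_below hbt hte)).symm htb
  · obtain ⟨m, ⟨hmb, -, hmin⟩, z, hz, hxz, hzy⟩ :=
      hreg.exists_succIdx_between hx hy hxy heb
    rcases hreg.below_total m t with hmt | htm
    · obtain ⟨z', hz', hzz', hz'y⟩ :=
        hreg.factorsThrough_of_presentedFirst_above hmt hte hfirst z hz y hy hzy
      exact ⟨z', hz', trans_of le hxz hzz', hz'y⟩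
    · have hme : Below le (A m) (A e) :=
        hmin e heb ⟨hbt.trans hte, fun h => heb.ne (hreg.eq_of_mem_of_eq hx h).symm⟩
      have hmt : Below le (A m) (A t) :=
        hmin t ((hfirst m htm hme).trans_lt hmb)
          ⟨hbt, fun h => htb (hreg.eq_of_mem_of_eq hx h).symm⟩
      exact ⟨z, hreg.eq_of_below_of_below hmt htm ▸ hz, hxz, hzy⟩
termination_by (b : ℕ) + e
decreasing_by all_goals omega

theorem factorsThrough_of_presentedFirst_below [IsPartialOrder α le]
    (hreg : IsRegularPoset le w A) {b e t : Fin n} (hbt : Below le (A b) (A t))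
    (hte : Below le (A t) (A e)) (hfirst : PresentedFirstIn le A b t t) :
    FactorsThrough le (A b) (A t) (A e) := by
  intro x hx y hy hxy
  by_cases htb : t = b
  · exact ⟨x, htb ▸ hx, refl_of le x, hxy⟩
  by_cases hte_eq : t = e
  · exact ⟨y, hte_eq ▸ hy, hxy, refl_of le y⟩
  rcases lt_trichotomy b e with hbe | rfl | heb
  · obtain ⟨m, ⟨hme, -, hmax⟩, z, hz, hxz, hzy⟩ :=
      hreg.exists_predIdx_between hx hy hxy hbe
    have hbm : Below le (A b) (A m) :=
      hmax b hbe ⟨hbt.trans hte, fun h => hbe.ne (hreg.eq_of_mem_of_eq hx h)⟩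
    rcases hreg.below_total t m with htm | hmt
    · obtain ⟨z', hz', hxz', hz'z⟩ :=
        hreg.factorsThrough_of_presentedFirst_below hbt htm hfirst x hx z hz hxz
      exact ⟨z', hz', hxz', trans_of le hz'z hzy⟩
    · have htm : Below le (A t) (A m) :=
        hmax t ((hfirst m hbm hmt).trans_lt hme)
          ⟨hte, fun h => hte_eq (hreg.eq_of_mem_of_eq hy h.symm).symm⟩
      exact ⟨z, hreg.eq_of_below_of_below hmt htm ▸ hz, hxz, hzy⟩
  · exact absurd (hreg.eq_of_mem_of_eq hx (hreg.eq_of_below_of_below hbt hte)).symm htb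
  · obtain ⟨m, ⟨hmb, ⟨hbm, -⟩, hmin⟩, z, hz, hxz, hzy⟩ :=
      hreg.exists_succIdx_between hx hy hxy heb
    have hmt : Below le (A m) (A t) :=
      hmin t ((hfirst b (below_refl _) hbt).lt_of_ne htb)
        ⟨hbt, fun h => htb (hreg.eq_of_mem_of_eq hx h).symm⟩
    obtain ⟨z', hz', hzz', hz'y⟩ := hreg.factorsThrough_of_presentedFirst_below hmt hte
      (fun u hmu hut => hfirst u (hbm.trans hmu) hut) z hz y hy hzy
    exact ⟨z', hz', trans_of le hxz hzz', hz'y⟩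
termination_by (b : ℕ) + e
decreasing_by all_goals omega

end IsRegularPoset

theorem stmt_3_general {α : Type} (le : α → α → Prop)
    (hle : IsPartialOrder α le) (w : ℕ) {n : ℕ} (A : Fin n → Finset α)
    (hreg : IsRegularPoset le w A) (r s t : Fin n)
    (hrt : Below le (A r) (A t)) (hts : Below le (A t) (A s))
    (hearliest :
      (∀ u : Fin n, Below le (A t) (A u) → Below le (A u) (A s) → t ≤ u) ∨
      (∀ u : Fin n, Below le (A r) (A u) → Below le (A u) (A t) → t ≤ u)) :
    ∀ x ∈ A r, ∀ y ∈ A s, le x y → ∃ z ∈ A t, le x z ∧ le z y := by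
  rcases hearliest with hfirst | hfirst
  · exact hreg.factorsThrough_of_presentedFirst_above hrt hts hfirst
  · exact hreg.factorsThrough_of_presentedFirst_below hrt hts hfirst

/-- In a regular poset, if `A r ⊏ A s`, `A r ⊑ A t ⊑ A s`, and
`A t` is the earliest presented antichain in the interval `[A t, A s]` or in
`[A r, A t]`, then every comparability `x ≤ y` with `x ∈ A r`, `y ∈ A s`
factors through some `z ∈ A t`. -/
theorem stmt_3 {α : Type} [Fintype α] (le : α → α → Prop)
    (hle : IsPartialOrder α le) (w : ℕ) {n : ℕ} (A : Fin n → Finset α)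
    (hreg : IsRegularPoset le w A) (r s t : Fin n)
    (hrs : StrictBelow le (A r) (A s))
    (hrt : Below le (A r) (A t)) (hts : Below le (A t) (A s))
    (hearliest :
      (∀ u : Fin n, Below le (A t) (A u) → Below le (A u) (A s) → t ≤ u) ∨
      (∀ u : Fin n, Below le (A r) (A u) → Below le (A u) (A t) → t ≤ u)) :
    ∀ x ∈ A r, ∀ y ∈ A s, le x y → ∃ z ∈ A t, le x z ∧ le z y :=
  stmt_3_general le hle w A hreg r s t hrt hts hearliest
end

section
/- Let (P, A_1,…,A_n) be a regular poset of width w and suppose L ⊆ P induces a canonical m-ladder with lower leg x_1,…,x_m and upper leg y_1,…,y_m. Then for every i ∈ {1,…,m}, the set of elements of A(y_i) that are ≥ y_1 has size at least i, i.e., |U_P[y_1] ∩ A(y_i)| ≥ i. -/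
/-!
Induct along the ladder. Composing core matchings (R4) along the factorizations
given by R5 yields, for `A(y_i) ⊑ A(x_{i+1}) ⊑ A(y_{i+1})`, a bijection
`A(y_i) → A(y_{i+1})` moving every element upwards. It maps `U[y_1] ∩ A(y_i)`
injectively into `U[y_1] ∩ A(y_{i+1})`, and `y_{i+1}` is not in the image: its
preimage lies below `x_{i+1}`, which is incomparable to `y_1`.
-/

variable {α : Type*} {le : α → α → Prop}

def IsMatching (le : α → α → Prop) (S T : Finset α) (f : α → α) : Prop :=
  Set.BijOn f S T ∧ ∀ a ∈ S, le a (f a)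

theorem IsMatching.id [Std.Refl le] (S : Finset α) : IsMatching le S S id :=
  ⟨Set.bijOn_id _, fun a _ => refl_of le a⟩

theorem IsMatching.comp [IsTrans α le] {S T U : Finset α} {f g : α → α}
    (hf : IsMatching le S T f) (hg : IsMatching le T U g) : IsMatching le S U (g ∘ f) :=
  ⟨hg.1.comp hf.1, fun a ha => trans_of le (hf.2 a ha) (hg.2 (f a) (hf.1.mapsTo ha))⟩

/-- `f` maps `S ∩ U[p]` injectively into `T ∩ U[p]`, missing `f s`. -/
theorem IsMatching.ncard_upper_lt [IsTrans α le] {S T : Finset α} {f : α → α}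
    (hf : IsMatching le S T f) {p s : α} (hs : s ∈ S) (hps : ¬ le p s) (hpt : le p (f s)) :
    {z | z ∈ S ∧ le p z}.ncard < {z | z ∈ T ∧ le p z}.ncard := by
  have hinj : Set.InjOn f {z | z ∈ S ∧ le p z} := hf.1.injOn.mono fun z hz => hz.1
  rw [← hinj.ncard_image]
  refine Set.ncard_lt_ncard ?_ ((T.finite_toSet).subset fun z hz => hz.1)
  refine Set.ssubset_iff_exists.2 ⟨?_, f s, ⟨hf.1.mapsTo hs, hpt⟩, ?_⟩
  · rintro _ ⟨z, ⟨hz, hpz⟩, rfl⟩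
    exact ⟨hf.1.mapsTo hz, trans_of le hpz (hf.2 z hz)⟩
  · rintro ⟨z, ⟨hz, hpz⟩, hzs⟩
    exact hps (hf.1.injOn hz hs hzs ▸ hpz)

theorem IsCore.exists_matching {A B : Finset α} (h : IsCore le A B) {u v : α} (hu : u ∈ A)
    (hv : v ∈ B) (huv : le u v) : ∃ f, IsMatching le A B f ∧ f u = v :=
  let ⟨f, hbij, hle, hfu⟩ := h.2 u hu v hv huv
  ⟨f, ⟨hbij, hle⟩, hfu⟩

namespace IsRegularPoset

variable {w n : ℕ} {A : Fin n → Finset α}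

theorem below_of_le [IsPartialOrder α le] (hreg : IsRegularPoset le w A) {c d : Fin n}
    {u v : α} (hu : u ∈ A c) (hv : v ∈ A d) (huv : le u v) (hne : u ≠ v) :
    Below le (A c) (A d) := by
  obtain ⟨-, -, hanti, -, -, htotal, -⟩ := hreg
  refine (htotal c d).resolve_right fun hdc => ?_
  obtain ⟨z, hz, hvz⟩ := hdc v hv
  have huz : u = z := by
    by_contra h
    exact (hanti c u hu z hz h).1 (trans_of le huv hvz)
  exact hne (antisymm_of le huv (huz ▸ hvz))

/-- By R5, `u < v` factors through a `⊑`-neighbour `A k` of the later-presented of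
`A c`, `A d`; that step is matched by a core (R4), and the remaining pair has smaller
`max c d`. -/
theorem exists_matching_of_le [IsPreorder α le] (hreg : IsRegularPoset le w A) {c d : Fin n}
    (hcd : Below le (A c) (A d)) {u v : α} (hu : u ∈ A c) (hv : v ∈ A d) (huv : le u v) :
    ∃ f, IsMatching le (A c) (A d) f ∧ f u = v := by
  obtain ⟨-, hdisj, hanti, -, -, -, hsucc, hpred, hfactor⟩ := hreg
  induction hN : max c d using WellFoundedLT.induction generalizing c d u v with
  | ind N ih =>
    subst hN
    by_cases hcd_eq : c = d
    · subst hcd_eq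
      have huv_eq : u = v := by
        by_contra h
        exact (hanti c u hu v hv h).1 huv
      exact ⟨id, .id _, huv_eq⟩
    have hstrict : StrictBelow le (A c) (A d) :=
      ⟨hcd, fun h => hdisj c d hcd_eq u hu (h ▸ hu)⟩
    have hne : u ≠ v := fun h => hdisj c d hcd_eq u hu (h ▸ hv)
    rcases lt_or_gt_of_ne hcd_eq with hlt | hgt
    · obtain ⟨k, hk, z, hz, huz, hzv, -⟩ := (hfactor c d u v hu hv huv hne).2 hlt
      obtain ⟨f, hf, hfu⟩ :=
        ih (max c k) (by simp [hlt, hk.1]) (hk.2.2 c hlt hstrict) hu hz huz rfl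
      obtain ⟨g, hg, hgz⟩ := (hpred d k hk).exists_matching hz hv hzv
      exact ⟨g ∘ f, hf.comp hg, by simp [hfu, hgz]⟩
    · obtain ⟨k, hk, z, hz, huz, -, hzv⟩ := (hfactor c d u v hu hv huv hne).1 hgt
      obtain ⟨f, hf, hfu⟩ := (hsucc c k hk).exists_matching hu hz huz
      obtain ⟨g, hg, hgz⟩ :=
        ih (max k d) (by simp [hgt, hk.1]) (hk.2.2 d hgt hstrict) hz hv hzv rfl
      exact ⟨g ∘ f, hf.comp hg, by simp [hfu, hgz]⟩

/-- The matching `A b → A c → A a` sends the preimage of `x` to `y'`, and that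
preimage lies below `x`, hence not above `p`. -/
theorem ncard_upper_lt_of_rung [IsPartialOrder α le] (hreg : IsRegularPoset le w A)
    {a b c : Fin n} {p y x y' : α} (hy : y ∈ A b) (hx : x ∈ A c) (hy' : y' ∈ A a)
    (hbc : Below le (A b) (A c)) (hxy' : le x y') (hne : x ≠ y') (hpx : ¬ le p x)
    (hpy' : le p y') :
    {z | z ∈ A b ∧ le p z}.ncard < {z | z ∈ A a ∧ le p z}.ncard := by
  obtain ⟨v, hv, hyv⟩ := hbc y hy
  obtain ⟨g, hg, -⟩ := hreg.exists_matching_of_le hbc hy hv hyv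
  obtain ⟨s, hs, hgs⟩ := hg.1.surjOn hx
  obtain ⟨h, hh, hhx⟩ :=
    hreg.exists_matching_of_le (hreg.below_of_le hx hy' hxy' hne) hx hy' hxy'
  have hsx : le s x := hgs ▸ hg.2 s hs
  exact (hg.comp hh).ncard_upper_lt hs (fun hps => hpx (trans_of le hps hsx))
    (by simpa [hgs, hhx] using hpy')

end IsRegularPoset

theorem stmt_4_general {α : Type} (le : α → α → Prop)
    (hle : IsPartialOrder α le) (w : ℕ) {n : ℕ} (A : Fin n → Finset α)
    (hreg : IsRegularPoset le w A) {m : ℕ} (hm : 0 < m)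
    (x y : Fin m → α) (hlad : IsLadderIn le x y)
    (hcan : ∀ i j : Fin m, (i : ℕ) + 1 = (j : ℕ) →
      ∀ a b : Fin n, y i ∈ A a → x j ∈ A b → Below le (A a) (A b)) :
    ∀ (i : Fin m) (a : Fin n), y i ∈ A a →
      (i : ℕ) + 1 ≤ {z : α | z ∈ A a ∧ le (y ⟨0, hm⟩) z}.ncard := by
  rintro ⟨i, hi⟩ a ha
  induction i generalizing a with
  | zero =>
    exact (Set.ncard_pos ((A a).finite_toSet.subset fun z hz => hz.1)).2
      ⟨_, ha, refl_of le _⟩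
  | succ k ih =>
    obtain ⟨b, hb⟩ := hreg.1 (y ⟨k, by omega⟩)
    obtain ⟨c, hc⟩ := hreg.1 (x ⟨k + 1, hi⟩)
    have h0 : (⟨0, hm⟩ : Fin m) < ⟨k + 1, hi⟩ := Fin.mk_lt_mk.2 k.succ_pos
    have hstep := hreg.ncard_upper_lt_of_rung hb hc ha (hcan _ _ rfl b c hb hc)
      (hlad.2.2.1 _).1 (hlad.2.2.1 _).2 (hlad.2.2.2 _ _ h0).1 (hlad.2.1 _ _ h0).1
    have := ih (by omega) b hb
    simp only at this ⊢
    omega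

/-- If `L` induces a canonical `m`-ladder in a regular poset with
lower leg `x` and upper leg `y`, then for every `i`, the set of elements of
the antichain containing `y i` that are above `y 1` has at least `i` elements
(1-indexed; `(i : ℕ) + 1` in 0-indexing). -/
theorem stmt_4 {α : Type} [Fintype α] (le : α → α → Prop)
    (hle : IsPartialOrder α le) (w : ℕ) {n : ℕ} (A : Fin n → Finset α)
    (hreg : IsRegularPoset le w A) {m : ℕ} (hm : 0 < m)
    (x y : Fin m → α) (hlad : IsLadderIn le x y)
    (hcan : ∀ i j : Fin m, (i : ℕ) + 1 = (j : ℕ) →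
      ∀ a b : Fin n, y i ∈ A a → x j ∈ A b → Below le (A a) (A b)) :
    ∀ (i : Fin m) (a : Fin n), y i ∈ A a →
      (i : ℕ) + 1 ≤ {z : α | z ∈ A a ∧ le (y ⟨0, hm⟩) z}.ncard :=
  stmt_4_general le hle w A hreg hm x y hlad hcan
end

section
/- Let P be a finite poset with an n-Grundy coloring g, let x_1,…,x_k be an ascending chain of P, and let y_1,…,y_{k−1} be elements such that y_i is a g(x_i)-witness of x_{i+1} for each i ∈ [k−1]. Then (C1) x_i <_P y_i for each i ∈ [k−1], and (C2) y_i ≯_P x_j for all 1 ≤ i < j ≤ k. (Dually, for a descending chain x_1,…,x_k with such witnesses, x_i >_P y_i and y_i ≮_P x_j for i < j.) -/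
/-!
Colour classes of a Grundy colouring are chains, so the witness `y_i`, which has the colour of
`x_i`, is comparable to `x_i`; it cannot lie below `x_i`, since it would then lie below `x_{i+1}`.
If `x_j ≤ y_i` for some `j > i`, then `x_{i+1} ≤ x_j ≤ y_i`, again contradicting incomparability.
A descending chain is an ascending chain of the dual order, to which the same argument applies.
-/

open Function

section GrundyWitness

variable {α : Type*} {r : α → α → Prop} {n : ℕ} {g : α → ℕ}

theorem IsGrundy.swap (hg : IsGrundy r n g) : IsGrundy (swap r) n g := by
  obtain ⟨hrange, hsurj, hchain, hwit⟩ := hg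
  refine ⟨hrange, hsurj, fun u v huv => (hchain u v huv).symm, fun v i hi hiv => ?_⟩
  obtain ⟨u, ⟨hvu, huv⟩, hgu⟩ := hwit v i hi hiv
  exact ⟨u, ⟨huv, hvu⟩, hgu⟩

theorem IsGrundy.rel_of_rel_of_not_rel [IsTrans α r] (hg : IsGrundy r n g) {a b y : α}
    (hab : r a b) (hyb : ¬ r y b) (hgy : g y = g a) : r a y ∧ a ≠ y := by
  refine ⟨(hg.2.2.1 y a hgy).resolve_left fun hya => hyb (_root_.trans hya hab), ?_⟩
  rintro rfl
  exact hyb hab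

variable {k : ℕ}

theorem IsAscending.rel_of_le [IsPreorder α r] {x : Fin k → α} (hx : IsAscending r g x)
    {i j : Fin k} (hij : i ≤ j) : r (x i) (x j) := by
  rcases hij.eq_or_lt with rfl | hlt
  · exact refl _
  · exact (hx i j hlt).1.1

variable {x : Fin (k + 1) → α}

theorem IsAscending.rel_witness [IsTrans α r] (hg : IsGrundy r n g) (hx : IsAscending r g x)
    {i : Fin k} {y : α} (hy : ¬ r y (x i.succ)) (hgy : g y = g (x i.castSucc)) :
    r (x i.castSucc) y ∧ x i.castSucc ≠ y :=
  hg.rel_of_rel_of_not_rel (hx _ _ i.castSucc_lt_succ).1.1 hy hgy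

theorem IsAscending.not_rel_witness [IsPreorder α r] (hx : IsAscending r g x) {i : Fin k}
    {j : Fin (k + 1)} (hij : (i : ℕ) < j) {y : α} (hy : ¬ r (x i.succ) y) : ¬ r (x j) y :=
  fun hxy => hy (_root_.trans (hx.rel_of_le (Fin.le_iff_val_le_val.2 hij)) hxy)

end GrundyWitness

theorem stmt_9_general {α : Type} (le : α → α → Prop)
    (hle : IsPartialOrder α le) (N : ℕ) (g : α → ℕ) (hg : IsGrundy le N g)
    (k : ℕ) (x : Fin (k + 1) → α) (y : Fin k → α)
    (hwit : ∀ i : Fin k, (¬ le (y i) (x i.succ) ∧ ¬ le (x i.succ) (y i)) ∧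
      g (y i) = g (x i.castSucc)) :
    (IsAscending le g x →
      (∀ i : Fin k, le (x i.castSucc) (y i) ∧ x i.castSucc ≠ y i) ∧
      (∀ (i : Fin k) (j : Fin (k + 1)), (i : ℕ) < (j : ℕ) →
        ¬ (le (x j) (y i) ∧ x j ≠ y i))) ∧
    (IsDescending le g x →
      (∀ i : Fin k, le (y i) (x i.castSucc) ∧ x i.castSucc ≠ y i) ∧
      (∀ (i : Fin k) (j : Fin (k + 1)), (i : ℕ) < (j : ℕ) →
        ¬ (le (y i) (x j) ∧ y i ≠ x j))) := by
  have := hle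
  refine ⟨fun hasc => ?_, fun hdesc => ?_⟩
  · exact ⟨fun i => hasc.rel_witness hg (hwit i).1.1 (hwit i).2,
      fun i j hij h => hasc.not_rel_witness hij (hwit i).1.2 h.1⟩
  · have hasc : IsAscending (swap le) g x := hdesc
    exact ⟨fun i => hasc.rel_witness hg.swap (hwit i).1.2 (hwit i).2,
      fun i j hij h => hasc.not_rel_witness hij (hwit i).1.1 h.1⟩

/-- For an ascending chain `x_1,…,x_{k+1}` with `y_i` a
`g(x_i)`-witness of `x_{i+1}`: (C1) `x_i < y_i`, and (C2) `¬(x_j < y_i)` for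
`i < j`; dually for descending chains. -/
theorem stmt_9 {α : Type} [Fintype α] (le : α → α → Prop)
    (hle : IsPartialOrder α le) (N : ℕ) (g : α → ℕ) (hg : IsGrundy le N g)
    (k : ℕ) (x : Fin (k + 1) → α) (y : Fin k → α)
    (hwit : ∀ i : Fin k, (¬ le (y i) (x i.succ) ∧ ¬ le (x i.succ) (y i)) ∧
      g (y i) = g (x i.castSucc)) :
    (IsAscending le g x →
      (∀ i : Fin k, le (x i.castSucc) (y i) ∧ x i.castSucc ≠ y i) ∧
      (∀ (i : Fin k) (j : Fin (k + 1)), (i : ℕ) < (j : ℕ) →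
        ¬ (le (x j) (y i) ∧ x j ≠ y i))) ∧
    (IsDescending le g x →
      (∀ i : Fin k, le (y i) (x i.castSucc) ∧ x i.castSucc ≠ y i) ∧
      (∀ (i : Fin k) (j : Fin (k + 1)), (i : ℕ) < (j : ℕ) →
        ¬ (le (y i) (x j) ∧ y i ≠ x j))) :=
  stmt_9_general le hle N g hg k x y hwit
end

section
/- Let P and Q be finite posets such that P admits an s-Grundy coloring and Q admits an n-Grundy coloring. Then the lexicographic product P·Q admits an (s·n)-Grundy coloring; explicitly, if f is an s-Grundy coloring of P and g an n-Grundy coloring of Q, then h((p,q)) = (f(p)−1)·n + g(q) is an (s·n)-Grundy coloring of P·Q. -/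
/-!
Read a color of `P·Q` as a two-digit number in base `n`, with high digit `f p - 1` and low
digit `g q`. Equal colors force equal digits, hence comparability in both factors, hence in
`P·Q`. For a smaller color, either its high digit is smaller, and a `P`-witness `p'` for it
makes `(p', q')` incomparable to `(p, q)` whatever `q'` is, or the high digits agree and a
`Q`-witness inside the fibre over `p` does the job.
-/

section MixedRadix

variable {n b b₁ b₂ c₁ c₂ : ℕ}

theorem mul_add_le_mul_of_lt (hb : b ≤ n) (h : c₁ < c₂) : c₁ * n + b ≤ c₂ * n :=
  calc c₁ * n + b ≤ (c₁ + 1) * n := by rw [Nat.succ_mul]; omega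
    _ ≤ c₂ * n := Nat.mul_le_mul_right n h

theorem lt_or_eq_and_lt_of_mul_add_lt (hb₁ : 1 ≤ b₁) (hb₂ : b₂ ≤ n)
    (h : c₁ * n + b₁ < c₂ * n + b₂) : c₁ < c₂ ∨ c₁ = c₂ ∧ b₁ < b₂ := by
  rcases lt_trichotomy c₁ c₂ with hc | rfl | hc
  · exact Or.inl hc
  · exact Or.inr ⟨rfl, by omega⟩
  · have := mul_add_le_mul_of_lt hb₂ hc
    omega

theorem eq_and_eq_of_mul_add_eq (hb₁ : 1 ≤ b₁) (hb₁n : b₁ ≤ n) (hb₂ : 1 ≤ b₂)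
    (hb₂n : b₂ ≤ n) (h : c₁ * n + b₁ = c₂ * n + b₂) : c₁ = c₂ ∧ b₁ = b₂ := by
  rcases lt_trichotomy c₁ c₂ with hc | rfl | hc
  · have := mul_add_le_mul_of_lt hb₁n hc
    omega
  · exact ⟨rfl, by omega⟩
  · have := mul_add_le_mul_of_lt hb₂n hc
    omega

theorem exists_eq_mul_add (hn : 0 < n) {i : ℕ} (hi : 1 ≤ i) :
    ∃ c b, 1 ≤ b ∧ b ≤ n ∧ i = c * n + b :=
  ⟨(i - 1) / n, (i - 1) % n + 1, by omega, Nat.mod_lt _ hn,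
    by have := Nat.div_add_mod' (i - 1) n; omega⟩

end MixedRadix

section LexProduct

variable {α β : Type*} {leP : α → α → Prop} {leQ : β → β → Prop}

theorem lexLe_comparable {a b : α × β} (h₁ : leP a.1 b.1 ∨ leP b.1 a.1)
    (h₂ : leQ a.2 b.2 ∨ leQ b.2 a.2) : LexLe leP leQ a b ∨ LexLe leP leQ b a := by
  by_cases hab : a.1 = b.1
  · rcases h₂ with h | h
    · exact Or.inl (Or.inr ⟨hab, h⟩)
    · exact Or.inr (Or.inr ⟨hab.symm, h⟩)
  · rcases h₁ with h | h
    · exact Or.inl (Or.inl ⟨h, hab⟩)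
    · exact Or.inr (Or.inl ⟨h, Ne.symm hab⟩)

theorem lexLe_incomparable_of_fst {a b : α × β} (hab : a.1 ≠ b.1)
    (h : ¬ leP a.1 b.1 ∧ ¬ leP b.1 a.1) :
    ¬ LexLe leP leQ a b ∧ ¬ LexLe leP leQ b a := by
  unfold LexLe
  exact ⟨by rintro (⟨h', -⟩ | ⟨h', -⟩) <;> tauto, by rintro (⟨h', -⟩ | ⟨h', -⟩) <;> tauto⟩

theorem lexLe_incomparable_of_snd (p : α) {q q' : β} (h : ¬ leQ q q' ∧ ¬ leQ q' q) :
    ¬ LexLe leP leQ (p, q) (p, q') ∧ ¬ LexLe leP leQ (p, q') (p, q) := by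
  unfold LexLe
  exact ⟨by rintro (⟨-, h'⟩ | ⟨-, h'⟩) <;> tauto, by rintro (⟨-, h'⟩ | ⟨-, h'⟩) <;> tauto⟩

def lexColoring (n : ℕ) (f : α → ℕ) (g : β → ℕ) : α × β → ℕ :=
  fun pq => (f pq.1 - 1) * n + g pq.2

variable {s n : ℕ} {f : α → ℕ} {g : β → ℕ}

theorem IsGrundy.lexLe_lexColoring (hf : IsGrundy leP s f) (hg : IsGrundy leQ n g) :
    IsGrundy (LexLe leP leQ) (s * n) (lexColoring n f g) := by
  obtain ⟨hf_range, hf_surj, hf_chain, hf_witness⟩ := hf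
  obtain ⟨hg_range, hg_surj, hg_chain, hg_witness⟩ := hg
  refine ⟨fun v => ?_, fun i hi hin => ?_, fun u v huv => ?_, fun v i hi hiv => ?_⟩
  · obtain ⟨hf₁, hfs⟩ := hf_range v.1
    obtain ⟨hg₁, hgn⟩ := hg_range v.2
    exact ⟨by unfold lexColoring; omega, mul_add_le_mul_of_lt hgn (by omega)⟩
  · have hn : 0 < n := Nat.pos_of_mul_pos_left (a := s) (by omega)
    obtain ⟨c, b, hb, hbn, rfl⟩ := exists_eq_mul_add hn hi
    have hcs : c < s := Nat.lt_of_mul_lt_mul_right (a := n) (by omega)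
    obtain ⟨p, hp⟩ := hf_surj (c + 1) (by omega) hcs
    obtain ⟨q, hq⟩ := hg_surj b hb hbn
    exact ⟨(p, q), by simp [lexColoring, hp, hq]⟩
  · obtain ⟨hc, hb⟩ := eq_and_eq_of_mul_add_eq (hg_range u.2).1 (hg_range u.2).2
      (hg_range v.2).1 (hg_range v.2).2 huv
    have hf_eq : f u.1 = f v.1 := by have := (hf_range u.1).1; have := (hf_range v.1).1; omega
    exact lexLe_comparable (hf_chain _ _ hf_eq) (hg_chain _ _ hb)
  · dsimp only [lexColoring] at hiv
    obtain ⟨hg₁, hgn⟩ := hg_range v.2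
    have hn : 0 < n := by omega
    obtain ⟨c, b, hb, hbn, rfl⟩ := exists_eq_mul_add hn hi
    rcases lt_or_eq_and_lt_of_mul_add_lt hb hgn hiv with hc | ⟨hc, hbg⟩
    · obtain ⟨p, hp_incomp, hp⟩ := hf_witness v.1 (c + 1) (by omega) (by omega)
      obtain ⟨q, hq⟩ := hg_surj b hb hbn
      have hpv : p ≠ v.1 := fun h => by subst h; omega
      exact ⟨(p, q), lexLe_incomparable_of_fst hpv hp_incomp, by simp [lexColoring, hp, hq]⟩
    · obtain ⟨q, hq_incomp, hq⟩ := hg_witness v.2 b hb hbg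
      exact ⟨(v.1, q), lexLe_incomparable_of_snd v.1 hq_incomp,
        by simp [lexColoring, hq, hc]⟩

end LexProduct

theorem stmt_16_general {α β : Type}
    (leP : α → α → Prop) (leQ : β → β → Prop)
    (s n : ℕ) (f : α → ℕ) (g : β → ℕ)
    (hf : IsGrundy leP s f) (hg : IsGrundy leQ n g) :
    IsGrundy (LexLe leP leQ) (s * n)
      (fun pq => (f pq.1 - 1) * n + g pq.2) :=
  hf.lexLe_lexColoring hg

/-- if `f` is an `s`-Grundy coloring of `P` and `g` an
`n`-Grundy coloring of `Q`, then `h(p,q) = (f p − 1)·n + g q` is an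
`(s·n)`-Grundy coloring of the lexicographic product `P·Q`. -/
theorem stmt_16 {α β : Type} [Fintype α] [Fintype β]
    (leP : α → α → Prop) (leQ : β → β → Prop)
    (hP : IsPartialOrder α leP) (hQ : IsPartialOrder β leQ)
    (s n : ℕ) (f : α → ℕ) (g : β → ℕ)
    (hf : IsGrundy leP s f) (hg : IsGrundy leQ n g) :
    IsGrundy (LexLe leP leQ) (s * n)
      (fun pq => (f pq.1 - 1) * n + g pq.2) :=
  stmt_16_general leP leQ s n f g hf hg
end

section
/- Let m ≥ 2 and let P and Q be finite L_m-free posets such that Q has a least element and a greatest element. Then the lexicographic product P·Q is L_m-free. -/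
/-!
Project a ladder `(x, y)` of `P · Q` to `P`. The projection is again a ladder unless some
`y i` and `x j` with `i ≤ j` lie in a common fibre `{a} × Q`. In that case the rungs force
`y i` to lie in that fibre for every non-final `i` and `x j` for every non-initial `j`;
keeping the second coordinates of the elements in the fibre and replacing the rest by the
bottom (lower leg) or the top (upper leg) of `Q` gives a ladder of `Q`.
-/

section LexLe

variable {α β : Type*} {leP : α → α → Prop} {leQ : β → β → Prop} {a b : α × β}

theorem LexLe.fst_le [Std.Refl leP] (h : LexLe leP leQ a b) : leP a.1 b.1 := by
  rcases h with ⟨hle, -⟩ | ⟨heq, -⟩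
  · exact hle
  · exact heq ▸ refl_of leP a.1

theorem LexLe.snd_le_and_ne_of_fst_eq (h : LexLe leP leQ a b) (hne : a ≠ b) (heq : a.1 = b.1) :
    leQ a.2 b.2 ∧ a.2 ≠ b.2 := by
  refine ⟨?_, fun h₂ => hne (Prod.ext heq h₂)⟩
  rcases h with ⟨-, hne₁⟩ | ⟨-, hle⟩
  · exact absurd heq hne₁
  · exact hle

theorem fst_eq_of_not_lexLe (hab : ¬ LexLe leP leQ a b) (hba : ¬ LexLe leP leQ b a)
    (hcomp : leP a.1 b.1 ∨ leP b.1 a.1) : a.1 = b.1 := by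
  by_contra hne
  rcases hcomp with hle | hle
  · exact hab (Or.inl ⟨hle, hne⟩)
  · exact hba (Or.inl ⟨hle, Ne.symm hne⟩)

theorem snd_not_le_of_not_lexLe (hab : ¬ LexLe leP leQ a b) (heq : a.1 = b.1) :
    ¬ leQ a.2 b.2 :=
  fun hle => hab (Or.inr ⟨heq, hle⟩)

end LexLe

namespace IsLadderIn

variable {α β : Type*} {leP : α → α → Prop} {leQ : β → β → Prop} {m : ℕ}
  {x y : Fin m → α × β}

theorem fst_lower_le [Std.Refl leP] (h : IsLadderIn (LexLe leP leQ) x y) {i j : Fin m}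
    (hij : i ≤ j) : leP (x i).1 (x j).1 := by
  rcases hij.eq_or_lt with rfl | hlt
  · exact refl_of leP _
  · exact (h.1 i j hlt).1.fst_le

theorem fst_upper_le [Std.Refl leP] (h : IsLadderIn (LexLe leP leQ) x y) {i j : Fin m}
    (hij : i ≤ j) : leP (y i).1 (y j).1 := by
  rcases hij.eq_or_lt with rfl | hlt
  · exact refl_of leP _
  · exact (h.2.1 i j hlt).1.fst_le

theorem fst_lower_le_upper [Std.Refl leP] (h : IsLadderIn (LexLe leP leQ) x y) (i : Fin m) :
    leP (x i).1 (y i).1 :=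
  (h.2.2.1 i).1.fst_le

theorem fst_eq_of_comparable (h : IsLadderIn (LexLe leP leQ) x y) {i j : Fin m} (hij : i < j)
    (hcomp : leP (y i).1 (x j).1 ∨ leP (x j).1 (y i).1) : (y i).1 = (x j).1 :=
  fst_eq_of_not_lexLe (h.2.2.2 i j hij).1 (h.2.2.2 i j hij).2 hcomp

theorem fst [Std.Refl leP] (h : IsLadderIn (LexLe leP leQ) x y)
    (hsep : ∀ i j, i ≤ j → (y i).1 ≠ (x j).1) :
    IsLadderIn leP (fun i => (x i).1) (fun i => (y i).1) := by
  have hincomp : ∀ i j, i < j → ¬ leP (y i).1 (x j).1 ∧ ¬ leP (x j).1 (y i).1 :=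
    fun i j hij => ⟨fun hle => hsep i j hij.le (h.fst_eq_of_comparable hij (Or.inl hle)),
      fun hle => hsep i j hij.le (h.fst_eq_of_comparable hij (Or.inr hle))⟩
  refine ⟨fun i j hij => ⟨h.fst_lower_le hij.le, fun (heq : (x i).1 = (x j).1) => ?_⟩,
    fun i j hij => ⟨h.fst_upper_le hij.le, fun (heq : (y i).1 = (y j).1) => ?_⟩,
    fun i => ⟨h.fst_lower_le_upper i, (hsep i i le_rfl).symm⟩, hincomp⟩
  · exact (hincomp i j hij).2 (heq ▸ h.fst_lower_le_upper i)
  · exact (hincomp i j hij).2 (heq ▸ h.fst_lower_le_upper j)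

theorem fst_eq_of_lt_of_fst_eq [Std.Refl leP] (h : IsLadderIn (LexLe leP leQ) x y)
    {i₀ j₀ : Fin m} {a : α} (hy₀ : (y i₀).1 = a) (hx₀ : (x j₀).1 = a) {i j : Fin m}
    (hij : i < j)
    (ha : (y i).1 = a ∨ (x j).1 = a) : (y i).1 = a ∧ (x j).1 = a := by
  have hy : leP (y i).1 a ∨ leP a (y i).1 := by
    rcases le_total i i₀ with hle | hle
    · exact Or.inl (hy₀ ▸ h.fst_upper_le hle)
    · exact Or.inr (hy₀ ▸ h.fst_upper_le hle)
  have hx : leP (x j).1 a ∨ leP a (x j).1 := by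
    rcases le_total j j₀ with hle | hle
    · exact Or.inl (hx₀ ▸ h.fst_lower_le hle)
    · exact Or.inr (hx₀ ▸ h.fst_lower_le hle)
  rcases ha with ha | ha
  · have heq := h.fst_eq_of_comparable hij (ha ▸ hx.symm)
    exact ⟨ha, heq ▸ ha⟩
  · have heq := h.fst_eq_of_comparable hij (ha ▸ hy)
    exact ⟨heq ▸ ha, ha⟩

theorem fst_eq_of_lt [Std.Refl leP] (h : IsLadderIn (LexLe leP leQ) x y) {i₀ j₀ : Fin m}
    (h₀ : i₀ ≤ j₀) {a : α} (hy₀ : (y i₀).1 = a) (hx₀ : (x j₀).1 = a) {i j : Fin m}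
    (hij : i < j) : (y i).1 = a ∧ (x j).1 = a := by
  by_cases hi : i < j₀
  · exact h.fst_eq_of_lt_of_fst_eq hy₀ hx₀ hij
      (Or.inl (h.fst_eq_of_lt_of_fst_eq hy₀ hx₀ hi (Or.inr hx₀)).1)
  · have hj : i₀ < j := lt_of_le_of_lt h₀ (lt_of_le_of_lt (not_lt.1 hi) hij)
    exact h.fst_eq_of_lt_of_fst_eq hy₀ hx₀ hij
      (Or.inr (h.fst_eq_of_lt_of_fst_eq hy₀ hx₀ hj (Or.inl hy₀)).2)

theorem snd [Std.Refl leP] [DecidableEq α] (h : IsLadderIn (LexLe leP leQ) x y)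
    {i₀ j₀ : Fin m} (h₀ : i₀ ≤ j₀) {a : α} (hy₀ : (y i₀).1 = a) (hx₀ : (x j₀).1 = a)
    {b₀ b₁ : β} (hbot : ∀ b, leQ b₀ b) (htop : ∀ b, leQ b b₁) :
    IsLadderIn leQ (fun i => if (x i).1 = a then (x i).2 else b₀)
      (fun i => if (y i).1 = a then (y i).2 else b₁) := by
  have hfib {i j : Fin m} (hij : i < j) := h.fst_eq_of_lt h₀ hy₀ hx₀ hij
  have hrung {i j : Fin m} (hij : i < j) : ¬ leQ (y i).2 (x j).2 ∧ ¬ leQ (x j).2 (y i).2 :=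
    have heq : (y i).1 = (x j).1 := (hfib hij).1.trans (hfib hij).2.symm
    ⟨snd_not_le_of_not_lexLe (h.2.2.2 i j hij).1 heq,
      snd_not_le_of_not_lexLe (h.2.2.2 i j hij).2 heq.symm⟩
  have hx_lt {i : Fin m} (hi : (x i).1 ≠ a) : i < j₀ :=
    lt_of_not_ge fun hle => hi (hle.eq_or_lt.elim (fun e => e ▸ hx₀) fun hlt => (hfib hlt).2)
  have hy_lt {i : Fin m} (hi : (y i).1 ≠ a) : i₀ < i :=
    lt_of_not_ge fun hle => hi (hle.eq_or_lt.elim (fun e => e ▸ hy₀) fun hlt => (hfib hlt).1)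
  refine ⟨fun i j hij => ?_, fun i j hij => ?_, fun i => ?_, fun i j hij => ?_⟩
  · dsimp only
    rw [if_pos (hfib hij).2]
    split_ifs with hxi
    · exact (h.1 i j hij).1.snd_le_and_ne_of_fst_eq (h.1 i j hij).2
        (hxi.trans (hfib hij).2.symm)
    · exact ⟨hbot _, fun e => (hrung hij).2 (e ▸ hbot _)⟩
  · dsimp only
    rw [if_pos (hfib hij).1]
    split_ifs with hyj
    · exact (h.2.1 i j hij).1.snd_le_and_ne_of_fst_eq (h.2.1 i j hij).2
        ((hfib hij).1.trans hyj.symm)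
    · exact ⟨htop _, fun e => (hrung hij).2 (e ▸ htop _)⟩
  · dsimp only
    by_cases hxi : (x i).1 = a <;> by_cases hyi : (y i).1 = a
    · rw [if_pos hxi, if_pos hyi]
      exact (h.2.2.1 i).1.snd_le_and_ne_of_fst_eq (h.2.2.1 i).2 (hxi.trans hyi.symm)
    · rw [if_pos hxi, if_neg hyi]
      exact ⟨htop _, fun e => (hrung (hy_lt hyi)).1 (e ▸ htop _)⟩
    · rw [if_neg hxi, if_pos hyi]
      exact ⟨hbot _, fun e => (hrung (hx_lt hxi)).1 (e ▸ hbot _)⟩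
    · exact absurd (hfib (hy_lt hyi)).2 hxi
  · dsimp only
    rw [if_pos (hfib hij).1, if_pos (hfib hij).2]
    exact hrung hij

end IsLadderIn

theorem stmt_17_general {α β : Type}
    (leP : α → α → Prop) (leQ : β → β → Prop)
    (hP : IsPartialOrder α leP)
    (m : ℕ) (hPfree : LFree leP m) (hQfree : LFree leQ m)
    (b0 b1 : β) (hbot : ∀ b, leQ b0 b) (htop : ∀ b, leQ b b1) :
    LFree (LexLe leP leQ) m := by
  classical
  rintro ⟨x, y, h⟩
  by_cases hmeet : ∃ i j, i ≤ j ∧ (y i).1 = (x j).1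
  · obtain ⟨i₀, j₀, h₀, heq⟩ := hmeet
    exact hQfree ⟨_, _, h.snd h₀ heq rfl hbot htop⟩
  · push Not at hmeet
    exact hPfree ⟨_, _, h.fst hmeet⟩

/-- for `m ≥ 2`, the lexicographic product of two finite
`L_m`-free posets, the second having a least and a greatest element, is
`L_m`-free. -/
theorem stmt_17 {α β : Type} [Fintype α] [Fintype β]
    (leP : α → α → Prop) (leQ : β → β → Prop)
    (hP : IsPartialOrder α leP) (hQ : IsPartialOrder β leQ)
    (m : ℕ) (hm : 2 ≤ m) (hPfree : LFree leP m) (hQfree : LFree leQ m)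
    (b0 b1 : β) (hbot : ∀ b, leQ b0 b) (htop : ∀ b, leQ b b1) :
    LFree (LexLe leP leQ) m :=
  stmt_17_general leP leQ hP m hPfree hQfree b0 b1 hbot htop
end
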